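/- Let (k,G,h) be an admissible triplet, with witness u and symmetries g₂,…,g_k ∈ G such that u_i = u₁ ∘ g_i for i = 2,…,k. Then (h(g_i))^{−1}(i) = 1 for every i = 2,…,k, and consequently every (G,h)-equivariant function v = (v₁,…,v_k) satisfies v_i = v₁ ∘ g_i for every i = 2,…,k; in particular any (G,h)-equivariant function is completely determined by its first component together with g₂,…,g_k. -/

import Mathlib

open MeasureTheory Metric Filter Finset Topology
open scoped RealInnerProductSpace

noncomputable section

/-- Euclidean space `ℝ^N`. -/
abbrev Euc (N : ℕ) := EuclideanSpace ℝ (Fin N)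

/-- The unit sphere `S^{N-1} ⊆ ℝ^N`. -/
def Sph (N : ℕ) : Set (Euc N) := Metric.sphere (0 : Euc N) 1

/-- Surface measure on the sphere of radius `r` centered at the origin:
the `(N-1)`-dimensional Hausdorff measure restricted to the sphere. -/
def sphMeas (N : ℕ) (r : ℝ) : Measure (Euc N) :=
  (μH[(N : ℝ) - 1]).restrict (Metric.sphere (0 : Euc N) r)

/-- The Euclidean Laplacian of `f : ℝ^N → ℝ` at `x`. -/
def lap {N : ℕ} (f : Euc N → ℝ) (x : Euc N) : ℝ :=
  ∑ i : Fin N,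
    iteratedFDeriv ℝ 2 f x ![EuclideanSpace.single i 1, EuclideanSpace.single i 1]

/-- The group of linear isometries of `ℝ^N` (the orthogonal group `O(N)`). -/
abbrev OrthGroup (N : ℕ) := Euc N ≃ₗᵢ[ℝ] Euc N

variable {N k : ℕ}

/-- `(G,h)`-equivariance of a vector-valued function `u : ℝ^N → ℝ^k`:
`u_i = u_{(h g)⁻¹ i} ∘ g` for every `g ∈ G` and every index `i`. -/
def Equivariant (G : Subgroup (OrthGroup N)) (h : G →* Equiv.Perm (Fin k))
    (u : Fin k → Euc N → ℝ) : Prop :=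
  ∀ (g : G) (i : Fin k) (x : Euc N), u i x = u ((h g)⁻¹ i) ((g : OrthGroup N) x)

/-- `f` is positively `0`-homogeneous.  We use `0`-homogeneous functions on `ℝ^N \ {0}`
to represent functions defined on the sphere `S^{N-1}`; with this representation the
tangential gradient `∇_θ` and the Laplace–Beltrami operator `Δ_θ` on `S^{N-1}` coincide,
at points of the unit sphere, with the Euclidean gradient and Laplacian of the
representative. -/
def ZeroHomog {N : ℕ} (f : Euc N → ℝ) : Prop :=
  ∀ t : ℝ, 0 < t → ∀ x : Euc N, f (t • x) = f x

/-- Membership in `H¹(S^{N-1})`, for a `0`-homogeneous representative: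
`f` and its (tangential) gradient are square-integrable on the unit sphere. -/
def MemSphH1 {N : ℕ} (f : Euc N → ℝ) : Prop :=
  MemLp f 2 (sphMeas N 1) ∧ MemLp (fun x => ‖gradient f x‖) 2 (sphMeas N 1)

/-- The triplet `(k,G,h)` is admissible: `G` is nontrivial and there is a
`(G,h)`-equivariant function `u ∈ H¹(ℝ^N,ℝ^k)` with nonnegative nontrivial components
having pairwise disjoint supports, all components being obtained from the first one by
composition with elements of `G`. -/
structure AdmissibleTriplet (N : ℕ) (k : ℕ) [NeZero k] (G : Subgroup (OrthGroup N))
    (h : G →* Equiv.Perm (Fin k)) : Prop where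
  nontrivialG : G ≠ ⊥
  witness : ∃ u : Fin k → Euc N → ℝ,
    (∀ i, MemLp (u i) 2 (volume : Measure (Euc N)) ∧
      MemLp (fun x => ‖gradient (u i) x‖) 2 (volume : Measure (Euc N))) ∧
    Equivariant G h u ∧
    (∀ i, (∀ x, 0 ≤ u i x) ∧ ¬(∀ᵐ x ∂(volume : Measure (Euc N)), u i x = 0)) ∧
    (∀ i j, i ≠ j → ∀ x, u i x * u j x = 0) ∧
    (∃ g : Fin k → G, ∀ i, u i = u 0 ∘ (g i : OrthGroup N))

/-- The set `Λ_{(G,h)}` of (restrictions to `S^{N-1}`, represented by `0`-homogeneous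
extensions, of) `(G,h)`-equivariant functions fulfilling (i)-(iii) in the definition of
admissible triplet. -/
def LambdaSet (G : Subgroup (OrthGroup N)) (h : G →* Equiv.Perm (Fin k)) [NeZero k] :
    Set (Fin k → Euc N → ℝ) :=
  {φ | (∀ i, ZeroHomog (φ i)) ∧ (∀ i, MemSphH1 (φ i)) ∧ Equivariant G h φ ∧
    (∀ i, (∀ x, 0 ≤ φ i x) ∧ ¬(∀ᵐ x ∂(sphMeas N 1), φ i x = 0)) ∧
    (∀ i j, i ≠ j → ∀ x, φ i x * φ j x = 0) ∧
    (∃ g : Fin k → G, ∀ i, φ i = φ 0 ∘ (g i : OrthGroup N))}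

/-- `γ(t) = √(((N-2)/2)² + t) - (N-2)/2`. -/
def gammaFun (N : ℕ) (t : ℝ) : ℝ :=
  Real.sqrt ((((N : ℝ) - 2) / 2) ^ 2 + t) - ((N : ℝ) - 2) / 2

/-- The functional `I_β` on `H¹(S^{N-1},ℝ^k)`:
`I_β(u) = (1/k) ∑ᵢ γ( (∫ |∇_θ uᵢ|² + (β/2) uᵢ² ∑_{j≠i} uⱼ²) / ∫ uᵢ² )`.
For `β = 0` this is exactly the functional whose infimum over `Λ_{(G,h)}`
defines `ℓ(k,G,h)`. -/
def Ifun (N k : ℕ) (β : ℝ) (u : Fin k → Euc N → ℝ) : ℝ :=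
  (1 / (k : ℝ)) * ∑ i : Fin k, gammaFun N
    ((∫ x, (‖gradient (u i) x‖ ^ 2
        + (β / 2) * (u i x) ^ 2 * ∑ j ∈ Finset.univ.filter (· ≠ i), (u j x) ^ 2)
        ∂(sphMeas N 1))
      / (∫ x, (u i x) ^ 2 ∂(sphMeas N 1)))

/-- The optimal value `ℓ(k,G,h)`. -/
def ellVal (N k : ℕ) [NeZero k] (G : Subgroup (OrthGroup N))
    (h : G →* Equiv.Perm (Fin k)) : ℝ :=
  sInf {t : ℝ | ∃ φ ∈ LambdaSet G h, t = Ifun N k 0 φ}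

/-- The set of `(G,h)`-equivariant `H¹(S^{N-1},ℝ^k)` functions (represented by
`0`-homogeneous extensions). -/
def SphH1Equiv (G : Subgroup (OrthGroup N)) (h : G →* Equiv.Perm (Fin k)) :
    Set (Fin k → Euc N → ℝ) :=
  {u | (∀ i, ZeroHomog (u i)) ∧ (∀ i, MemSphH1 (u i)) ∧ Equivariant G h u}

/-- The optimal value `ℓ_β(k,G,h) = inf I_β` over equivariant functions. -/
def ellBeta (N k : ℕ) (G : Subgroup (OrthGroup N)) (h : G →* Equiv.Perm (Fin k))
    (β : ℝ) : ℝ :=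
  sInf {t : ℝ | ∃ u ∈ SphH1Equiv G h, t = Ifun N k β u}

/-- `V` is a (classical, positive) solution of the system
`ΔV_i = V_i ∑_{j≠i} V_j²`, `V_i > 0`, in `ℝ^N`. -/
def SolvesS {N k : ℕ} (V : Fin k → Euc N → ℝ) : Prop :=
  (∀ i, ContDiff ℝ 2 (V i)) ∧
  (∀ i x, lap (V i) x = V i x * ∑ j ∈ Finset.univ.filter (· ≠ i), (V j x) ^ 2) ∧
  (∀ i x, 0 < V i x)

/-- `H(V,r) = r^{1-N} ∫_{∂B_r} ∑ᵢ Vᵢ²`. -/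
def Hfun (N k : ℕ) (V : Fin k → Euc N → ℝ) (r : ℝ) : ℝ :=
  r ^ ((1 : ℝ) - N) * ∫ x, (∑ i : Fin k, (V i x) ^ 2) ∂(sphMeas N r)

/-- `E(V,r) = r^{2-N} ∫_{B_r} ( ∑ᵢ |∇Vᵢ|² + b ∑_{i<j} Vᵢ²Vⱼ² )`, with coupling `b`. -/
def Efun (N k : ℕ) (b : ℝ) (V : Fin k → Euc N → ℝ) (r : ℝ) : ℝ :=
  r ^ ((2 : ℝ) - N) * ∫ x in Metric.ball (0 : Euc N) r,
    ((∑ i : Fin k, ‖gradient (V i) x‖ ^ 2)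
      + b * ∑ i : Fin k, ∑ j ∈ Finset.univ.filter (fun j => i < j),
          (V i x) ^ 2 * (V j x) ^ 2)

/-- Almgren frequency function `N(V,r) = E(V,r)/H(V,r)`. -/
def NFreq (N k : ℕ) (b : ℝ) (V : Fin k → Euc N → ℝ) (r : ℝ) : ℝ :=
  Efun N k b V r / Hfun N k V r

/-- `J_i(r) = ∫_{B_r} ( |∇V_i|² + V_i² ∑_{j≠i} V_j² ) / |x|^{N-2}`. -/
def Jfun (N k : ℕ) (V : Fin k → Euc N → ℝ) (i : Fin k) (r : ℝ) : ℝ :=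
  ∫ x in Metric.ball (0 : Euc N) r,
    (‖gradient (V i) x‖ ^ 2
      + (V i x) ^ 2 * ∑ j ∈ Finset.univ.filter (· ≠ i), (V j x) ^ 2) / ‖x‖ ^ (N - 2)

/-- `u` (with multiplier `lam`) is a nonnegative `(G,h)`-equivariant normalized solution
of the Euler–Lagrange system `-Δ_θ u_i = lam·u_i - β u_i ∑_{j≠i} u_j²`, `u_i > 0`,
`∫_{S^{N-1}} u_i² = 1`, on the sphere `S^{N-1}`. -/
def ELSolution (N k : ℕ) (G : Subgroup (OrthGroup N)) (h : G →* Equiv.Perm (Fin k))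
    (β : ℝ) (u : Fin k → Euc N → ℝ) (lam : ℝ) : Prop :=
  u ∈ SphH1Equiv G h ∧
  (∀ i, ContDiffOn ℝ 2 (u i) {x : Euc N | x ≠ 0}) ∧
  0 ≤ lam ∧
  (∀ i, ∀ x ∈ Sph N, -(lap (u i) x)
      = lam * u i x - β * u i x * ∑ j ∈ Finset.univ.filter (· ≠ i), (u j x) ^ 2) ∧
  (∀ i, ∀ x ∈ Sph N, 0 < u i x) ∧
  (∀ i, ∫ x, (u i x) ^ 2 ∂(sphMeas N 1) = 1)

/-! If `(h (g i))⁻¹ i` were some `j ≠ 0`, equivariance along `g i` together with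
`u i = u 0 ∘ g i` would force `u j = u 0`; disjointness of the supports of `u 0` and `u j`
then makes `u 0` vanish identically, contradicting its nontriviality. -/

namespace Equivariant

variable {G : Subgroup (OrthGroup N)} {h : G →* Equiv.Perm (Fin k)} {u : Fin k → Euc N → ℝ}

theorem eq_comp (hu : Equivariant G h u) (g : G) (i : Fin k) :
    u i = u ((h g)⁻¹ i) ∘ (g : OrthGroup N) :=
  funext (hu g i)

theorem apply_perm_inv_eq_of_eq_comp (hu : Equivariant G h u) {g : G} {i j : Fin k}
    (hij : u i = u j ∘ (g : OrthGroup N)) : u ((h g)⁻¹ i) = u j :=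
  (g : OrthGroup N).surjective.injective_comp_right ((hu.eq_comp g i).symm.trans hij)

theorem perm_inv_apply_eq_of_eq_comp (hu : Equivariant G h u)
    (hdisj : ∀ i j, i ≠ j → ∀ x, u i x * u j x = 0) {g : G} {i j : Fin k} (hj : u j ≠ 0)
    (hij : u i = u j ∘ (g : OrthGroup N)) : (h g)⁻¹ i = j := by
  by_contra hne
  apply hj
  funext x
  have hprod := hdisj _ _ hne x
  rw [hu.apply_perm_inv_eq_of_eq_comp hij] at hprod
  exact mul_self_eq_zero.mp hprod

end Equivariant

theorem statement4_general (N k : ℕ) [NeZero k]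
    (G : Subgroup (OrthGroup N)) (h : G →* Equiv.Perm (Fin k))
    (u : Fin k → Euc N → ℝ)
    (hequiv : Equivariant G h u)
    (hnontriv : ∀ i, ¬(∀ᵐ x ∂(volume : Measure (Euc N)), u i x = 0))
    (hdisj : ∀ i j, i ≠ j → ∀ x, u i x * u j x = 0)
    (g : Fin k → G) (hg : ∀ i, u i = u 0 ∘ (g i : OrthGroup N)) :
    (∀ i : Fin k, (h (g i))⁻¹ i = 0) ∧
    (∀ v : Fin k → Euc N → ℝ, Equivariant G h v →
      ∀ i, v i = v 0 ∘ (g i : OrthGroup N)) := by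
  have hu₀ : u 0 ≠ 0 := fun hzero => hnontriv 0 (ae_of_all _ (congrFun hzero))
  have hperm (i : Fin k) : (h (g i))⁻¹ i = 0 :=
    hequiv.perm_inv_apply_eq_of_eq_comp hdisj hu₀ (hg i)
  refine ⟨hperm, fun v hv i => ?_⟩
  simpa only [hperm i] using hv.eq_comp (g i) i

/-- Remark 1.2. Let `(k,G,h)` be an admissible triplet with witness `u`
and symmetries `g i ∈ G` such that `u_i = u_0 ∘ g_i`. Then `(h(g_i))⁻¹ i = 0` (the first
index) for every `i`, and consequently every `(G,h)`-equivariant function `v` satisfies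
`v_i = v_0 ∘ g_i` for every `i`; in particular it is determined by its first component
together with `g₁,…,g_{k-1}`. -/
theorem statement4 (N k : ℕ) [NeZero k]
    (G : Subgroup (OrthGroup N)) (h : G →* Equiv.Perm (Fin k))
    (u : Fin k → Euc N → ℝ)
    (hequiv : Equivariant G h u)
    (hnonneg : ∀ i, ∀ x, 0 ≤ u i x)
    (hnontriv : ∀ i, ¬(∀ᵐ x ∂(volume : Measure (Euc N)), u i x = 0))
    (hdisj : ∀ i j, i ≠ j → ∀ x, u i x * u j x = 0)
    (g : Fin k → G) (hg : ∀ i, u i = u 0 ∘ (g i : OrthGroup N)) :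
    (∀ i : Fin k, (h (g i))⁻¹ i = 0) ∧
    (∀ v : Fin k → Euc N → ℝ, Equivariant G h v →
      ∀ i, v i = v 0 ∘ (g i : OrthGroup N)) :=
  statement4_general N k G h u hequiv hnontriv hdisj g hg
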